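/- For every point x ∈ ℝ¹³⁵ = (ℝ⁵)²⁷, there exist real numbers λ¹, …, λ²⁷, λ²⁸, λ²⁹ such that the Lagrange 1-form Σᵢ dEᵢ + Σᵢ λⁱ ωᵢ + λ²⁸ Σᵢ dGᵢ + λ²⁹ Σᵢ dQᵢ vanishes at x (as a linear functional on ℝ¹³⁵) if and only if I₁(x) = ⋯ = I₂₇(x) ≠ 0 and P₁(x) = ⋯ = P₂₇(x). -/

import Mathlib

/- The product economy ℝ¹³⁵ = (ℝ⁵)²⁷ is modeled as `Fin 27 → Fin 5 → ℝ`;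
   within each factor, index 0 = G, 1 = I, 2 = E, 3 = P, 4 = Q. -/

/-- Gibbs–Pfaff covector of the `i`-th economy at the point `x`:
`ωᵢ = dGᵢ − Iᵢ(x) dEᵢ + Pᵢ(x) dQᵢ`, a linear functional on ℝ¹³⁵. -/
noncomputable def ω (x : Fin 27 → Fin 5 → ℝ) (i : Fin 27) :
    (Fin 27 → Fin 5 → ℝ) → ℝ :=
  fun v => v i 0 - x i 1 * v i 2 + x i 3 * v i 4

/-!
The Lagrange form splits over the factors: its `dGᵢ`, `dEᵢ`, `dQᵢ` coefficients are
`λⁱ + λ²⁸`, `1 - λⁱ Iᵢ` and `λⁱ Pᵢ + λ²⁹`, and it vanishes iff all of them do. Then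
`λⁱ = -λ²⁸` for every `i`, which forces `Iᵢ = -1/λ²⁸ ≠ 0` and `Pᵢ = λ²⁹/λ²⁸`. Conversely, common
values `I ≠ 0` and `P` are matched by `λⁱ = 1/I`, `λ²⁸ = -1/I`, `λ²⁹ = -P/I`.
-/

open Finset

theorem forall_sum_sum_mul_eq_zero_iff {ι κ : Type*} [Fintype ι] [Fintype κ] [DecidableEq ι]
    [DecidableEq κ] (f : ι → κ → ℝ) :
    (∀ v : ι → κ → ℝ, ∑ i, ∑ k, f i k * v i k = 0) ↔ f = 0 := by
  refine ⟨fun h => ?_, fun h v => by simp [h]⟩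
  ext i k
  simpa [ite_and] using h fun j l => if j = i ∧ l = k then 1 else 0

theorem exists_lagrange_multipliers_iff {ι : Type*} (I P : ι → ℝ) :
    (∃ (lam : ι → ℝ) (μ ν : ℝ),
        ∀ i, lam i + μ = 0 ∧ 1 - lam i * I i = 0 ∧ lam i * P i + ν = 0) ↔
      (∀ i j, I i = I j) ∧ (∀ i, I i ≠ 0) ∧ (∀ i j, P i = P j) := by
  constructor
  · rintro ⟨lam, μ, ν, h⟩
    have values : ∀ i, I i = (-μ)⁻¹ ∧ I i ≠ 0 ∧ P i = ν / μ := by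
      intro i
      obtain ⟨hG, hE, hQ⟩ := h i
      have hlam : lam i = -μ := eq_neg_of_add_eq_zero_left hG
      have hI : -μ * I i = 1 := by rw [← hlam]; linarith
      have hμ : μ ≠ 0 := neg_ne_zero.mp (left_ne_zero_of_mul_eq_one hI)
      refine ⟨eq_inv_of_mul_eq_one_right hI, right_ne_zero_of_mul_eq_one hI, ?_⟩
      rw [hlam] at hQ
      field_simp
      linarith
    exact ⟨fun i j => by rw [(values i).1, (values j).1], fun i => (values i).2.1,
      fun i j => by rw [(values i).2.2, (values j).2.2]⟩
  · rintro ⟨hI, hI₀, hP⟩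
    rcases isEmpty_or_nonempty ι with _ | ⟨⟨i₀⟩⟩
    · exact ⟨0, 0, 0, isEmptyElim⟩
    refine ⟨fun _ => (I i₀)⁻¹, -(I i₀)⁻¹, -(P i₀ / I i₀), fun i => ?_⟩
    rw [hI i i₀, hP i i₀]
    have := hI₀ i₀
    refine ⟨add_neg_cancel _, ?_, ?_⟩ <;> field_simp <;> ring

def lagrangeCoeff (x : Fin 27 → Fin 5 → ℝ) (lam : Fin 27 → ℝ) (μ ν : ℝ) : Fin 27 → Fin 5 → ℝ :=
  fun i => ![lam i + μ, 0, 1 - lam i * x i 1, 0, lam i * x i 3 + ν]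

theorem lagrange_form_eq_sum_lagrangeCoeff (x : Fin 27 → Fin 5 → ℝ) (lam : Fin 27 → ℝ) (μ ν : ℝ)
    (v : Fin 27 → Fin 5 → ℝ) :
    (∑ i, v i 2) + (∑ i, lam i * ω x i v) + μ * (∑ i, v i 0) + ν * (∑ i, v i 4) =
      ∑ i, ∑ k, lagrangeCoeff x lam μ ν i k * v i k := by
  simp only [ω, lagrangeCoeff, Fin.sum_univ_five, mul_sum, ← sum_add_distrib]
  exact sum_congr rfl fun i _ => by simp only [Matrix.cons_val]; ring

theorem lagrangeCoeff_eq_zero_iff (x : Fin 27 → Fin 5 → ℝ) (lam : Fin 27 → ℝ) (μ ν : ℝ) :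
    lagrangeCoeff x lam μ ν = 0 ↔
      ∀ i, lam i + μ = 0 ∧ 1 - lam i * x i 1 = 0 ∧ lam i * x i 3 + ν = 0 := by
  simp [funext_iff, lagrangeCoeff, Fin.forall_fin_succ]

/-- For every `x ∈ ℝ¹³⁵`, there exist multipliers `λ¹, …, λ²⁷, λ²⁸, λ²⁹` making
the Lagrange 1-form `Σᵢ dEᵢ + Σᵢ λⁱ ωᵢ + λ²⁸ Σᵢ dGᵢ + λ²⁹ Σᵢ dQᵢ` vanish at `x`
if and only if `I₁(x) = ⋯ = I₂₇(x) ≠ 0` and `P₁(x) = ⋯ = P₂₇(x)`. -/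
theorem eu_balance_total_entropy (x : Fin 27 → Fin 5 → ℝ) :
    (∃ (lam : Fin 27 → ℝ) (lam28 lam29 : ℝ), ∀ v : Fin 27 → Fin 5 → ℝ,
        (∑ i, v i 2) + (∑ i, lam i * ω x i v)
          + lam28 * (∑ i, v i 0) + lam29 * (∑ i, v i 4) = 0) ↔
    ((∀ i j : Fin 27, x i 1 = x j 1) ∧ (∀ i : Fin 27, x i 1 ≠ 0) ∧
      (∀ i j : Fin 27, x i 3 = x j 3)) := by
  simp only [lagrange_form_eq_sum_lagrangeCoeff, forall_sum_sum_mul_eq_zero_iff,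
    lagrangeCoeff_eq_zero_iff]
  exact exists_lagrange_multipliers_iff (x · 1) (x · 3)
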